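/- arXiv:1704.07254 — 3 statements merged into one kernel-verified Lean document; each statement's English description precedes it below -/
import Mathlib

section
/- A ranked tree t is a Union tree if and only if every node x of t satisfies the Union condition: the set of ranks of the children of x equals {0, 1, ..., rank(x) − 1}. -/
open scoped Classical

/-- The raw data of a ranked tree: a node set `V`, a root, a parent map
(with `parent root = root` by convention) and a rank function. -/
structure PreTree (V : Type) where
  root : V
  parent : V → V
  rank : V → ℕ

namespace PreTree

variable {V W : Type}

/-- `Anc t x y` : `x` is a (weak) ancestor of `y` in `t`, i.e. `x = parent^[k] y`. -/
def Anc (t : PreTree V) (x y : V) : Prop := ∃ k : ℕ, t.parent^[k] y = x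

/-- `t` is a tree: the parent map fixes the root and every node reaches the root. -/
def IsTree (t : PreTree V) : Prop :=
  t.parent t.root = t.root ∧ ∀ x, t.Anc t.root x

/-- The rank strictly decreases from parent to child. -/
def RankDec (t : PreTree V) : Prop :=
  ∀ x, x ≠ t.root → t.rank x < t.rank (t.parent x)

/-- A ranked tree: a tree whose rank function strictly decreases towards the leaves. -/
def IsRanked (t : PreTree V) : Prop := t.IsTree ∧ t.RankDec

/-- `push t x y` : reattach `x` as a child of `y`, everything else unchanged. -/
noncomputable def push (t : PreTree V) (x y : V) : PreTree V :=
  ⟨t.root, Function.update t.parent x y, t.rank⟩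

/-- `x` and `y` are (distinct, non-root) siblings in `t`. -/
def Siblings (t : PreTree V) (x y : V) : Prop :=
  x ≠ y ∧ x ≠ t.root ∧ y ≠ t.root ∧ t.parent x = t.parent y

/-- One push step: `t ⊢ t'`. -/
def PushStep (t t' : PreTree V) : Prop :=
  ∃ x y, t.Siblings x y ∧ t.rank x < t.rank y ∧ t' = t.push x y

/-- Merge of two trees on disjoint node sets: attach `root s` below `root t`,
incrementing the rank of `root t` exactly when the two root ranks are equal. -/
noncomputable def merge (t : PreTree V) (s : PreTree W) : PreTree (V ⊕ W) where
  root := Sum.inl t.root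
  parent := fun z => match z with
    | Sum.inl v => Sum.inl (t.parent v)
    | Sum.inr w => if w = s.root then Sum.inl t.root else Sum.inr (s.parent w)
  rank := fun z => match z with
    | Sum.inl v =>
        if v = t.root ∧ t.rank t.root = s.rank s.root then t.rank v + 1 else t.rank v
    | Sum.inr w => s.rank w

/-- Collapse: reattach every non-root (weak) ancestor of `x` directly to the root. -/
noncomputable def collapse (t : PreTree V) (x : V) : PreTree V where
  root := t.root
  parent := fun y => if y ≠ t.root ∧ t.Anc y x then t.root else t.parent y
  rank := t.rank

/-- `s ⪯ t` : every ancestor relation of `s` also holds in `t`. -/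
def Le (s t : PreTree V) : Prop := ∀ x y, s.Anc x y → t.Anc x y

/-- Isomorphism of (pre)trees: a bijection preserving root, parent and rank. -/
structure Iso (t : PreTree V) (s : PreTree W) where
  toEquiv : V ≃ W
  map_root : toEquiv t.root = s.root
  map_parent : ∀ x, toEquiv (t.parent x) = s.parent (toEquiv x)
  map_rank : ∀ x, s.rank (toEquiv x) = t.rank x

theorem anc_parent_of_ne {t : PreTree V} {x y : V} (h : t.Anc x y) (hne : y ≠ x) :
    t.Anc x (t.parent y) := by
  obtain ⟨k, hk⟩ := h
  cases k with
  | zero => exact absurd hk hne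
  | succ n => exact ⟨n, by rw [← hk, Function.iterate_succ_apply]⟩

/-- The subtree of `t` rooted at `x`, on the node set of (weak) descendants of `x`. -/
noncomputable def subtree (t : PreTree V) (x : V) : PreTree {y : V // t.Anc x y} where
  root := ⟨x, ⟨0, rfl⟩⟩
  rank := fun y => t.rank y
  parent := fun y =>
    if h : (y : V) = x then ⟨x, ⟨0, rfl⟩⟩ else ⟨t.parent y, anc_parent_of_ne y.2 h⟩

/-- `DepthIs t x k` : the depth of `x` in `t` is exactly `k`. -/
def DepthIs (t : PreTree V) (x : V) (k : ℕ) : Prop :=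
  t.parent^[k] x = t.root ∧ ∀ j < k, t.parent^[j] x ≠ t.root

end PreTree

open PreTree

/-- Union trees: least class (up to isomorphism) containing singletons and closed
under `merge` of trees whose root ranks satisfy `rank t ≥ rank s`. -/
inductive IsUnion : {V : Type} → PreTree V → Prop
  | singleton {V : Type} (t : PreTree V)
      (h1 : ∀ x, x = t.root) (h2 : t.rank t.root = 0) : IsUnion t
  | merge {V W : Type} (t : PreTree V) (s : PreTree W)
      (ht : IsUnion t) (hs : IsUnion s) (hr : s.rank s.root ≤ t.rank t.root) :
      IsUnion (t.merge s)
  | iso {V W : Type} (t : PreTree V) (s : PreTree W)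
      (ht : IsUnion t) (hi : Nonempty (t.Iso s)) : IsUnion s

/-- Union-Find trees: least class (up to isomorphism) containing singletons and
closed under `merge` (with `rank t ≥ rank s`) and `collapse`. -/
inductive IsUnionFind : {V : Type} → PreTree V → Prop
  | singleton {V : Type} (t : PreTree V)
      (h1 : ∀ x, x = t.root) (h2 : t.rank t.root = 0) : IsUnionFind t
  | merge {V W : Type} (t : PreTree V) (s : PreTree W)
      (ht : IsUnionFind t) (hs : IsUnionFind s) (hr : s.rank s.root ≤ t.rank t.root) :
      IsUnionFind (t.merge s)
  | collapse {V : Type} (t : PreTree V) (x : V) (ht : IsUnionFind t) :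
      IsUnionFind (t.collapse x)
  | iso {V W : Type} (t : PreTree V) (s : PreTree W)
      (ht : IsUnionFind t) (hi : Nonempty (t.Iso s)) : IsUnionFind s

/-!
Merging `s` below the root of `t` gives that root exactly one new child, of rank `rank s`, and
raises its rank by one exactly when `rank s = rank t`; so merges, like isomorphisms, preserve the
Union condition. Conversely, if the root has rank `m + 1` it has a child `c` of rank `m`. The
subtree at `c` and the rest of the tree, whose root rank is reset to `m` or `m + 1` according as
`c` is or is not the only root child of rank `m`, again satisfy the Union condition, and `t` is
their merge; induction on the number of nodes concludes.
-/

theorem Set.eq_Iio_or_eq_Iic_of_insert_eq_Iic {α : Type*} [LinearOrder α] {S : Set α} {a : α}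
    (h : insert a S = Set.Iic a) : S = Set.Iio a ∨ S = Set.Iic a := by
  by_cases ha : a ∈ S
  · exact .inr (by rwa [Set.insert_eq_of_mem ha] at h)
  · exact .inl (by rw [← Set.insert_sdiff_self_of_notMem ha, h, Set.Iic_sdiff_right])

namespace PreTree

variable {V W : Type}

def childRanks (t : PreTree V) (x : V) : Set ℕ :=
  {r | ∃ y, y ≠ t.root ∧ t.parent y = x ∧ t.rank y = r}

def UnionCond (t : PreTree V) : Prop :=
  ∀ x, t.childRanks x = Set.Iio (t.rank x)

theorem unionCond_iff {t : PreTree V} :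
    t.UnionCond ↔ ∀ x r, (∃ y, y ≠ t.root ∧ t.parent y = x ∧ t.rank y = r) ↔ r < t.rank x :=
  forall_congr' fun _ => Set.ext_iff

theorem childRanks_iso {t : PreTree V} {s : PreTree W} (i : t.Iso s) (x : V) :
    s.childRanks (i.toEquiv x) = t.childRanks x := by
  ext r
  simp only [childRanks, Set.mem_ofPred_eq, i.toEquiv.surjective.exists, ← i.map_root,
    ← i.map_parent, i.map_rank, ne_eq, EmbeddingLike.apply_eq_iff_eq]

theorem UnionCond.of_iso {t : PreTree V} {s : PreTree W} (i : t.Iso s) (h : t.UnionCond) :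
    s.UnionCond :=
  i.toEquiv.surjective.forall.2 fun x => by rw [childRanks_iso, i.map_rank, h]

theorem childRanks_merge_root (t : PreTree V) (s : PreTree W) :
    (t.merge s).childRanks (.inl t.root) = insert (s.rank s.root) (t.childRanks t.root) := by
  ext r
  simp only [childRanks, merge, Sum.exists, Set.mem_insert_iff, Set.mem_ofPred_eq]
  grind

theorem childRanks_merge_inl (t : PreTree V) (s : PreTree W) {v : V} (hv : v ≠ t.root) :
    (t.merge s).childRanks (.inl v) = t.childRanks v := by
  ext r
  simp only [childRanks, merge, Sum.exists, Set.mem_ofPred_eq]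
  grind

theorem childRanks_merge_inr (t : PreTree V) (s : PreTree W) (w : W) :
    (t.merge s).childRanks (.inr w) = s.childRanks w := by
  ext r
  simp [childRanks, merge, Sum.exists, ite_eq_iff, and_assoc]

theorem unionCond_of_forall_eq_root {t : PreTree V} (h : ∀ x, x = t.root)
    (h0 : t.rank t.root = 0) : t.UnionCond := by
  intro x
  rw [h x, h0]
  ext r
  simp only [childRanks, Set.mem_Iio, Nat.not_lt_zero, iff_false]
  exact fun ⟨y, hy, _⟩ => hy (h y)

theorem UnionCond.merge {t : PreTree V} {s : PreTree W} (ht : t.UnionCond) (hs : s.UnionCond)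
    (hr : s.rank s.root ≤ t.rank t.root) : (t.merge s).UnionCond := by
  rintro (v | w)
  · by_cases hv : v = t.root
    · subst hv
      rw [childRanks_merge_root, ht]
      ext r
      simp only [PreTree.merge, Set.mem_insert_iff, Set.mem_Iio, true_and]
      split_ifs <;> omega
    · rw [childRanks_merge_inl t s hv, ht]
      simp [PreTree.merge, hv]
  · rw [childRanks_merge_inr, hs]
    rfl

theorem Anc.of_parent {t : PreTree V} {c y : V} (h : t.Anc c (t.parent y)) : t.Anc c y :=
  let ⟨k, hk⟩ := h
  ⟨k + 1, hk⟩

theorem IsTree.not_anc_root {t : PreTree V} (htr : t.IsTree) {c : V} (hc : c ≠ t.root) :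
    ¬ t.Anc c t.root := fun ⟨k, hk⟩ => hc (hk.symm.trans (Function.iterate_fixed htr.1 k))

theorem IsTree.eq_root_of_childRanks_root_eq_empty {t : PreTree V} (htr : t.IsTree)
    (h : t.childRanks t.root = ∅) (x : V) : x = t.root := by
  have childless : ∀ y, y ≠ t.root → t.parent y ≠ t.root := fun y hy hp =>
    h.subset ⟨y, hy, hp, rfl⟩
  obtain ⟨k, hk⟩ := htr.2 x
  induction k generalizing x with
  | zero => exact hk
  | succ k ih => by_contra hx; exact childless x hx (ih _ hk)

theorem subtree_parent_of_ne {t : PreTree V} {c : V} {y : {y // t.Anc c y}} (hy : (y : V) ≠ c) :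
    ((t.subtree c).parent y : V) = t.parent y := by
  simp [subtree, hy]

theorem isTree_subtree (t : PreTree V) (c : V) : (t.subtree c).IsTree := by
  refine ⟨dif_pos rfl, fun y => ?_⟩
  obtain ⟨k, hk⟩ := y.2
  induction k generalizing y with
  | zero => exact ⟨0, Subtype.ext hk⟩
  | succ k ih =>
    by_cases hyc : (y : V) = c
    · exact ⟨0, Subtype.ext hyc⟩
    obtain ⟨m, hm⟩ := ih ((t.subtree c).parent y) (by rwa [subtree_parent_of_ne hyc])
    exact ⟨m + 1, hm⟩

theorem childRanks_subtree {t : PreTree V} {c : V} (hnr : ¬ t.Anc c t.root)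
    (hcp : t.parent c = t.root) (x : {y // t.Anc c y}) :
    (t.subtree c).childRanks x = t.childRanks x := by
  ext r
  constructor
  · rintro ⟨y, hy, hp, rfl⟩
    have hyc : (y : V) ≠ c := fun h => hy (Subtype.ext h)
    refine ⟨y, fun h => hnr (h ▸ y.2), ?_, rfl⟩
    rw [← subtree_parent_of_ne hyc, hp]
  · rintro ⟨y, hy, hp, rfl⟩
    have hyc : y ≠ c := by
      rintro rfl
      exact hnr (hcp ▸ hp ▸ x.2)
    have hcy : t.Anc c y := (hp ▸ x.2 : t.Anc c (t.parent y)).of_parent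
    exact ⟨⟨y, hcy⟩, fun h => hyc (congrArg Subtype.val h),
      Subtype.ext ((subtree_parent_of_ne hyc).trans hp), rfl⟩

theorem UnionCond.subtree {t : PreTree V} (h : t.UnionCond) {c : V} (hnr : ¬ t.Anc c t.root)
    (hcp : t.parent c = t.root) : (t.subtree c).UnionCond := fun x => by
  rw [childRanks_subtree hnr hcp, h]
  rfl

def childRanksExcept (t : PreTree V) (c x : V) : Set ℕ :=
  {r | ∃ y, y ≠ t.root ∧ y ≠ c ∧ t.parent y = x ∧ t.rank y = r}

theorem insert_rank_childRanksExcept {t : PreTree V} {c x : V} (hcr : c ≠ t.root)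
    (hcp : t.parent c = x) : insert (t.rank c) (t.childRanksExcept c x) = t.childRanks x := by
  ext r
  constructor
  · rintro (rfl | ⟨y, hyr, -, hp, rfl⟩)
    exacts [⟨c, hcr, hcp, rfl⟩, ⟨y, hyr, hp, rfl⟩]
  · rintro ⟨y, hyr, hp, rfl⟩
    by_cases hyc : y = c
    exacts [.inl (hyc ▸ rfl), .inr ⟨y, hyr, hyc, hp, rfl⟩]

theorem childRanksExcept_of_parent_ne {t : PreTree V} {c x : V} (hcp : t.parent c ≠ x) :
    t.childRanksExcept c x = t.childRanks x := by
  ext r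
  exact ⟨fun ⟨y, hyr, _, hp, hy⟩ => ⟨y, hyr, hp, hy⟩,
    fun ⟨y, hyr, hp, hy⟩ => ⟨y, hyr, fun hyc => hcp (hyc ▸ hp), hp, hy⟩⟩

noncomputable def prune (t : PreTree V) (c : V) (r : ℕ) (hc : ¬ t.Anc c t.root) :
    PreTree {y : V // ¬ t.Anc c y} where
  root := ⟨t.root, hc⟩
  parent y := ⟨t.parent y, fun h => y.2 h.of_parent⟩
  rank y := if (y : V) = t.root then r else t.rank y

section prune

variable {t : PreTree V} {c : V} {r : ℕ} {hc : ¬ t.Anc c t.root}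

@[simp] theorem prune_rank_root : (t.prune c r hc).rank (t.prune c r hc).root = r :=
  if_pos rfl

theorem coe_prune_parent_iterate (k : ℕ) (y : {y // ¬ t.Anc c y}) :
    ((t.prune c r hc).parent^[k] y : V) = t.parent^[k] y := by
  induction k generalizing y with
  | zero => rfl
  | succ k ih => exact ih _

theorem IsTree.prune (htr : t.IsTree) : (t.prune c r hc).IsTree :=
  ⟨Subtype.ext htr.1, fun y =>
    let ⟨k, hk⟩ := htr.2 y
    ⟨k, Subtype.ext ((coe_prune_parent_iterate k y).trans hk)⟩⟩

theorem childRanks_prune (x : {y // ¬ t.Anc c y}) :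
    (t.prune c r hc).childRanks x = t.childRanksExcept c x := by
  ext r'
  constructor
  · rintro ⟨y, hy, hp, rfl⟩
    have hyr : (y : V) ≠ t.root := fun h => hy (Subtype.ext h)
    exact ⟨y, hyr, fun h => y.2 ⟨0, h⟩, congrArg Subtype.val hp, (if_neg hyr).symm⟩
  · rintro ⟨y, hyr, hyc, hp, rfl⟩
    have hcy : ¬ t.Anc c y := fun h => x.2 (hp ▸ anc_parent_of_ne h hyc)
    exact ⟨⟨y, hcy⟩, fun h => hyr (congrArg Subtype.val h), Subtype.ext hp, if_neg hyr⟩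

theorem UnionCond.prune (h : t.UnionCond) (hcp : t.parent c = t.root)
    (hroot : t.childRanksExcept c t.root = Set.Iio r) : (t.prune c r hc).UnionCond := by
  intro x
  rw [childRanks_prune]
  by_cases hx : (x : V) = t.root
  · have : x = (t.prune c r hc).root := Subtype.ext hx
    rw [hx, hroot, this, prune_rank_root]
  · rw [childRanksExcept_of_parent_ne (hcp ▸ Ne.symm hx), h]
    simp [PreTree.prune, hx]

noncomputable def mergePruneSubtreeIso (hcp : t.parent c = t.root)
    (hr : (if r = t.rank c then r + 1 else r) = t.rank t.root) :
    ((t.prune c r hc).merge (t.subtree c)).Iso t where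
  toEquiv := (Equiv.sumComm _ _).trans (Equiv.sumCompl (t.Anc c))
  map_root := rfl
  map_parent := by
    rintro (y | y)
    · rfl
    · by_cases hyc : (y : V) = c
      · have : y = (t.subtree c).root := Subtype.ext hyc
        subst this
        simp only [PreTree.merge, Equiv.trans_apply, Equiv.sumComm_apply, Sum.swap_inr,
          Equiv.sumCompl_apply_inl, if_true]
        exact hcp.symm
      · have : y ≠ (t.subtree c).root := fun h => hyc (congrArg Subtype.val h)
        simp [PreTree.merge, this, subtree_parent_of_ne hyc]
  map_rank := by
    rintro (y | y)
    · by_cases hyr : (y : V) = t.root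
      · have : y = (t.prune c r hc).root := Subtype.ext hyr
        subst this
        simp only [PreTree.merge, subtree, prune_rank_root, true_and, Equiv.trans_apply,
          Equiv.sumComm_apply, Sum.swap_inl, Equiv.sumCompl_apply_inr]
        exact hr.symm
      · simp [PreTree.merge, PreTree.prune, Subtype.ext_iff, hyr]
    · rfl

end prune

end PreTree

theorem IsUnion.unionCond {V : Type} {t : PreTree V} (h : IsUnion t) : t.UnionCond := by
  induction h with
  | singleton t h1 h2 => exact unionCond_of_forall_eq_root h1 h2
  | merge t s _ _ hr iht ihs => exact iht.merge ihs hr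
  | iso t s _ hi iht => exact iht.of_iso hi.some

theorem isUnion_of_unionCond {V : Type} [Fintype V] {t : PreTree V} (htr : t.IsTree)
    (h : t.UnionCond) : IsUnion t := by
  induction hn : Fintype.card V using Nat.strong_induction_on generalizing V with
  | _ n ih =>
  obtain h0 | ⟨m, hm⟩ : t.rank t.root = 0 ∨ ∃ m, t.rank t.root = m + 1 :=
    (Nat.eq_zero_or_pos _).imp_right Nat.exists_eq_add_one.2
  · have hchildless : t.childRanks t.root = ∅ := by rw [h, h0]; ext; simp
    exact IsUnion.singleton t (htr.eq_root_of_childRanks_root_eq_empty hchildless) h0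
  obtain ⟨c, hcr, hcp, hcm⟩ : m ∈ t.childRanks t.root := by rw [h, hm]; exact Nat.lt_add_one m
  have hnr := htr.not_anc_root hcr
  have hinsert : insert m (t.childRanksExcept c t.root) = Set.Iic m := by
    rw [← Set.Iio_add_one_eq_Iic, ← hm, ← h, ← hcm, insert_rank_childRanksExcept hcr hcp]
  obtain ⟨r, hr, hrm⟩ : ∃ r, t.childRanksExcept c t.root = Set.Iio r ∧ (r = m ∨ r = m + 1) :=
    (Set.eq_Iio_or_eq_Iic_of_insert_eq_Iic hinsert).elim (⟨m, ·, .inl rfl⟩)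
      fun hr => ⟨m + 1, hr.trans (Set.Iio_add_one_eq_Iic m).symm, .inr rfl⟩
  have hsub : IsUnion (t.subtree c) :=
    ih _ (hn ▸ Fintype.card_subtype_lt hnr) (isTree_subtree t c) (h.subtree hnr hcp) rfl
  have hpr : IsUnion (t.prune c r hnr) :=
    ih _ (hn ▸ Fintype.card_subtype_lt (not_not_intro ⟨0, rfl⟩)) htr.prune (h.prune hcp hr) rfl
  refine IsUnion.iso _ _ (IsUnion.merge _ _ hpr hsub ?_) ⟨mergePruneSubtreeIso hcp ?_⟩
  · rw [prune_rank_root]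
    exact hcm.trans_le (by omega)
  · rw [hcm, hm]
    rcases hrm with rfl | rfl <;> simp

/-- Cai: a ranked tree is a Union tree iff every node satisfies the
Union condition: the set of ranks of its children is `{0, 1, …, rank x − 1}`. -/
theorem isUnion_iff_unionCond {V : Type} [Fintype V] (t : PreTree V) (ht : t.IsRanked) :
    IsUnion t ↔
      ∀ x r, (∃ y, y ≠ t.root ∧ t.parent y = x ∧ t.rank y = r) ↔ r < t.rank x := by
  rw [← unionCond_iff]
  exact ⟨IsUnion.unionCond, isUnion_of_unionCond ht.1⟩
end

section
/- The rank of the root of a Union tree equals the height of the tree, and the nodes of rank 0 are exactly the leaves. -/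
open scoped Classical

open PreTree

/-!
Induction on the construction of a Union tree. Merging `s` below the root of `t` shifts every depth
of `s` by one and leaves the depths of `t` unchanged, so the height becomes `max (h t) (h s + 1)`;
since `rank s ≤ rank t`, this is `rank t + 1` when the ranks agree and `rank t` otherwise, which is
exactly the new root rank. The merge gives the root of `t` a child and raises its rank above
`rank s ≥ 0`, and changes neither the rank nor the children of any other node.
-/

namespace PreTree

variable {V W : Type}

def IsHeight (t : PreTree V) (n : ℕ) : Prop :=
  (∀ x k, t.DepthIs x k → k ≤ n) ∧ ∃ x, t.DepthIs x n

def IsLeaf (t : PreTree V) (x : V) : Prop :=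
  ¬∃ y, y ≠ t.root ∧ t.parent y = x

section Depth

variable {t : PreTree V}

theorem depthIs_zero {x : V} : t.DepthIs x 0 ↔ x = t.root := by
  simp [DepthIs]

theorem depthIs_succ {x : V} {k : ℕ} :
    t.DepthIs x (k + 1) ↔ x ≠ t.root ∧ t.DepthIs (t.parent x) k := by
  simp only [DepthIs, Nat.forall_lt_succ_left, Function.iterate_succ_apply,
    Function.iterate_zero_apply]
  tauto

theorem isHeight_of_forall_eq_root (h : ∀ x, x = t.root) : t.IsHeight 0 := by
  refine ⟨fun x k hk => ?_, t.root, depthIs_zero.2 rfl⟩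
  cases k with
  | zero => rfl
  | succ k => exact absurd (h x) (depthIs_succ.1 hk).1

theorem isLeaf_of_forall_eq_root (h : ∀ x, x = t.root) (x : V) : t.IsLeaf x :=
  fun ⟨y, hy, _⟩ => hy (h y)

end Depth

section Merge

variable (t : PreTree V) (s : PreTree W)

@[simp]
theorem merge_root : (t.merge s).root = Sum.inl t.root := rfl

@[simp]
theorem merge_parent_inl (v : V) : (t.merge s).parent (Sum.inl v) = Sum.inl (t.parent v) := rfl

theorem merge_parent_inr (w : W) :
    (t.merge s).parent (Sum.inr w) =
      if w = s.root then Sum.inl t.root else Sum.inr (s.parent w) := rfl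

@[simp]
theorem merge_rank_inr (w : W) : (t.merge s).rank (Sum.inr w) = s.rank w := rfl

theorem merge_rank_inl_of_ne {v : V} (hv : v ≠ t.root) :
    (t.merge s).rank (Sum.inl v) = t.rank v := by
  simp [merge, hv]

theorem merge_rank_root :
    (t.merge s).rank (Sum.inl t.root) =
      if t.rank t.root = s.rank s.root then t.rank t.root + 1 else t.rank t.root := by
  simp [merge]

theorem depthIs_merge_inl {v : V} {k : ℕ} :
    (t.merge s).DepthIs (Sum.inl v) k ↔ t.DepthIs v k := by
  induction k generalizing v with
  | zero => simp [depthIs_zero]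
  | succ k ih => simp [depthIs_succ, ih]

theorem not_depthIs_merge_inr_zero (w : W) : ¬(t.merge s).DepthIs (Sum.inr w) 0 := by
  simp [depthIs_zero]

theorem depthIs_merge_inr_succ {w : W} {k : ℕ} :
    (t.merge s).DepthIs (Sum.inr w) (k + 1) ↔ s.DepthIs w k := by
  induction k generalizing w with
  | zero => by_cases hw : w = s.root <;> simp [depthIs_succ, depthIs_zero, merge_parent_inr, hw]
  | succ k ih =>
    rw [depthIs_succ, depthIs_succ (t := s), merge_parent_inr]
    by_cases hw : w = s.root
    · simp [hw, depthIs_merge_inl, depthIs_succ]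
    · simp [hw, ih]

theorem IsHeight.merge {m n : ℕ} (ht : t.IsHeight m) (hs : s.IsHeight n) :
    (t.merge s).IsHeight (max m (n + 1)) := by
  obtain ⟨htle, v, hv⟩ := ht
  obtain ⟨hsle, w, hw⟩ := hs
  refine ⟨?_, ?_⟩
  · rintro (v | w) k hk
    · exact le_max_of_le_left (htle v k ((depthIs_merge_inl t s).1 hk))
    · cases k with
      | zero => exact absurd hk (not_depthIs_merge_inr_zero t s w)
      | succ k =>
        exact le_max_of_le_right (Nat.succ_le_succ (hsle w k ((depthIs_merge_inr_succ t s).1 hk)))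
  · rcases le_total m (n + 1) with hmn | hnm
    · exact ⟨Sum.inr w, by rw [max_eq_right hmn]; exact (depthIs_merge_inr_succ t s).2 hw⟩
    · exact ⟨Sum.inl v, by rw [max_eq_left hnm]; exact (depthIs_merge_inl t s).2 hv⟩

theorem not_isLeaf_merge_root : ¬(t.merge s).IsLeaf (Sum.inl t.root) :=
  fun h => h ⟨Sum.inr s.root, by simp, by simp [merge_parent_inr]⟩

theorem isLeaf_merge_inl_of_ne {v : V} (hv : v ≠ t.root) :
    (t.merge s).IsLeaf (Sum.inl v) ↔ t.IsLeaf v := by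
  refine not_congr ⟨?_, fun ⟨y, hy, hpy⟩ => ⟨Sum.inl y, by simpa using hy, by simpa using hpy⟩⟩
  rintro ⟨y | y, hy, hpy⟩
  · exact ⟨y, by simpa using hy, by simpa using hpy⟩
  · by_cases hys : y = s.root
    · simp [merge_parent_inr, hys, Ne.symm hv] at hpy
    · simp [merge_parent_inr, hys] at hpy

theorem isLeaf_merge_inr {w : W} : (t.merge s).IsLeaf (Sum.inr w) ↔ s.IsLeaf w := by
  refine not_congr ⟨?_, fun ⟨y, hy, hpy⟩ => ⟨Sum.inr y, by simp, by simp [merge_parent_inr, hy, hpy]⟩⟩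
  rintro ⟨y | y, -, hpy⟩
  · simp at hpy
  · by_cases hys : y = s.root
    · simp [merge_parent_inr, hys] at hpy
    · exact ⟨y, hys, by simpa [merge_parent_inr, hys] using hpy⟩

end Merge

namespace Iso

variable {t : PreTree V} {s : PreTree W}

theorem depthIs_iff (e : t.Iso s) {x : V} {k : ℕ} : s.DepthIs (e.toEquiv x) k ↔ t.DepthIs x k := by
  induction k generalizing x with
  | zero => rw [depthIs_zero, depthIs_zero, ← e.map_root, e.toEquiv.apply_eq_iff_eq]
  | succ k ih =>
    rw [depthIs_succ, depthIs_succ, ← e.map_parent, ih, ← e.map_root, e.toEquiv.apply_eq_iff_eq.ne]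

theorem isHeight_iff (e : t.Iso s) {n : ℕ} : s.IsHeight n ↔ t.IsHeight n := by
  simp only [IsHeight, ← e.toEquiv.forall_congr_right, ← e.toEquiv.exists_congr_right,
    e.depthIs_iff]

theorem isLeaf_iff (e : t.Iso s) {x : V} : s.IsLeaf (e.toEquiv x) ↔ t.IsLeaf x := by
  simp only [IsLeaf, ← e.toEquiv.exists_congr_right, ← e.map_root, ← e.map_parent, ne_eq,
    e.toEquiv.apply_eq_iff_eq]

end Iso

end PreTree

open PreTree

namespace IsUnion

theorem isHeight_rank_root {V : Type} {t : PreTree V} (hu : IsUnion t) :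
    t.IsHeight (t.rank t.root) := by
  induction hu with
  | singleton t h1 h2 => exact h2 ▸ isHeight_of_forall_eq_root h1
  | merge t s _ _ hr iht ihs =>
    rw [merge_root, merge_rank_root]
    convert iht.merge t s ihs using 1
    split_ifs <;> omega
  | iso t s _ hi ih =>
    obtain ⟨e⟩ := hi
    rwa [← e.map_root, e.map_rank, e.isHeight_iff]

theorem rank_eq_zero_iff_isLeaf {V : Type} {t : PreTree V} (hu : IsUnion t) (x : V) :
    t.rank x = 0 ↔ t.IsLeaf x := by
  induction hu with
  | singleton t h1 h2 => exact iff_of_true (h1 x ▸ h2) (isLeaf_of_forall_eq_root h1 x)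
  | merge t s _ _ hr iht ihs =>
    rcases x with v | w
    · by_cases hv : v = t.root
      · subst hv
        refine iff_of_false ?_ (not_isLeaf_merge_root t s)
        have := merge_rank_root t s
        split_ifs at this <;> omega
      · rw [merge_rank_inl_of_ne t s hv, isLeaf_merge_inl_of_ne t s hv, iht]
    · rw [merge_rank_inr, isLeaf_merge_inr, ihs]
  | iso t s _ hi ih =>
    obtain ⟨e⟩ := hi
    rw [← e.toEquiv.apply_symm_apply x, e.map_rank, e.isLeaf_iff, ih]

end IsUnion

theorem isUnion_rank_eq_height_and_leaves_general {V : Type} (t : PreTree V)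
    (hu : IsUnion t) :
    ((∀ x k, t.DepthIs x k → k ≤ t.rank t.root) ∧ (∃ x, t.DepthIs x (t.rank t.root))) ∧
    (∀ x, t.rank x = 0 ↔ ¬∃ y, y ≠ t.root ∧ t.parent y = x) :=
  ⟨hu.isHeight_rank_root, hu.rank_eq_zero_iff_isLeaf⟩

/-- the root rank of a Union tree equals its height, and the
rank-0 nodes are exactly the leaves. -/
theorem isUnion_rank_eq_height_and_leaves {V : Type} (t : PreTree V)
    (ht : t.IsRanked) (hu : IsUnion t) :
    ((∀ x k, t.DepthIs x k → k ≤ t.rank t.root) ∧ (∃ x, t.DepthIs x (t.rank t.root))) ∧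
    (∀ x, t.rank x = 0 ↔ ¬∃ y, y ≠ t.root ∧ t.parent y = x) :=
  isUnion_rank_eq_height_and_leaves_general t hu
end

section
/- A ranked tree t is a Union-Find tree if and only if there exists a Union tree s with t ⊢* s, i.e., s is obtainable from t by a finite sequence of push operations. -/
open scoped Classical

open PreTree

/-!
A push keeps the root and the ranks and moves a node to a sibling of higher rank, one level
further from the root. Hence from a ranked `t` one can keep pushing towards any ranked `s` with
the same root and ranks in which every ancestor relation of `t` still holds (`t ⪯ s`), and this
terminates. A Union-Find tree `t` satisfies `t ⪯ s` for the Union tree `s` built the same way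
with all collapses omitted.

Backwards, undoing a push moves a node to its grandparent. This preserves being Union-Find, by
induction over the construction: inside a merge it happens within one of the two parts, and
when the grandparent is the root it is a collapse.
-/

attribute [ext] PreTree

namespace PreTree

variable {V W : Type}

section Ancestors

variable {t s u : PreTree V}

theorem Anc.refl (t : PreTree V) (x : V) : t.Anc x x := ⟨0, rfl⟩

theorem anc_parent (t : PreTree V) (x : V) : t.Anc (t.parent x) x := ⟨1, rfl⟩

theorem Anc.trans {x y z : V} (hxy : t.Anc x y) (hyz : t.Anc y z) : t.Anc x z := by
  obtain ⟨k, rfl⟩ := hxy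
  obtain ⟨j, rfl⟩ := hyz
  exact ⟨k + j, Function.iterate_add_apply _ _ _ _⟩

theorem Anc.map {s : PreTree W} (f : V → W)
    (hf : ∀ v, t.parent v ≠ v → s.parent (f v) = f (t.parent v)) {x y : V} (h : t.Anc x y) :
    s.Anc (f x) (f y) := by
  obtain ⟨k, rfl⟩ := h
  induction k generalizing y with
  | zero => exact Anc.refl s _
  | succ k ih =>
    rw [Function.iterate_succ_apply]
    by_cases hy : t.parent y = y
    · rw [hy]; exact ih
    · exact (ih (y := t.parent y)).trans ⟨1, hf y hy⟩

theorem Anc.eq_root (hroot : t.parent t.root = t.root) {x : V} (h : t.Anc x t.root) :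
    x = t.root := by
  obtain ⟨k, rfl⟩ := h
  exact Function.iterate_fixed hroot k

theorem IsRanked.rank_lt_of_anc (ht : t.IsRanked) {x y : V} (h : t.Anc x y) (hne : x ≠ y) :
    t.rank y < t.rank x := by
  obtain ⟨k, rfl⟩ := h
  induction k generalizing y with
  | zero => exact absurd rfl hne
  | succ k ih =>
    rw [Function.iterate_succ_apply] at hne ⊢
    have hy : y ≠ t.root := by
      rintro rfl
      rw [ht.1.1, Function.iterate_fixed ht.1.1] at hne
      exact hne rfl
    by_cases hpy : t.parent^[k] (t.parent y) = t.parent y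
    · rw [hpy]; exact ht.2 y hy
    · exact (ht.2 y hy).trans (ih hpy)

theorem exists_child_of_anc {p x : V} (h : t.Anc p x) (hne : p ≠ x) :
    ∃ w, t.Anc w x ∧ t.parent w = p ∧ w ≠ p := by
  obtain ⟨k, rfl⟩ := h
  induction k generalizing x with
  | zero => exact absurd rfl hne
  | succ k ih =>
    rw [Function.iterate_succ_apply] at hne ⊢
    by_cases hpx : t.parent^[k] (t.parent x) = t.parent x
    · exact ⟨x, Anc.refl t x, hpx.symm, fun h => hne h.symm⟩
    · obtain ⟨w, hwx, hw⟩ := ih hpx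
      exact ⟨w, hwx.trans (anc_parent t x), hw⟩

theorem le_of_forall_anc_parent (h : ∀ v, s.Anc (t.parent v) v) : t.Le s := by
  rintro x y ⟨k, rfl⟩
  induction k with
  | zero => exact Anc.refl s y
  | succ k ih =>
    rw [Function.iterate_succ_apply']
    exact (h _).trans ih

theorem Le.trans (hts : t.Le s) (hsu : s.Le u) : t.Le u :=
  fun x y h => hsu x y (hts x y h)

end Ancestors

section Push

variable {t : PreTree V}

@[simp] theorem push_root (t : PreTree V) (x y : V) : (t.push x y).root = t.root := rfl

@[simp] theorem push_rank (t : PreTree V) (x y : V) : (t.push x y).rank = t.rank := rfl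

@[simp] theorem push_parent_self (t : PreTree V) (x y : V) : (t.push x y).parent x = y := by
  simp [push]

theorem push_parent_of_ne (t : PreTree V) {x v : V} (y : V) (hv : v ≠ x) :
    (t.push x y).parent v = t.parent v := by
  simp [push, hv]

@[simp] theorem push_push (t : PreTree V) (x y z : V) : (t.push x y).push x z = t.push x z := by
  simp [push]

@[simp] theorem push_parent_eq (t : PreTree V) (x : V) : t.push x (t.parent x) = t :=
  PreTree.ext rfl (Function.update_eq_self x t.parent) rfl

theorem anc_push_of_anc {x v : V} (y : V) (h : t.Anc x v) : (t.push x y).Anc x v := by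
  obtain ⟨k, hk⟩ := h
  induction k generalizing v with
  | zero => exact hk ▸ Anc.refl _ v
  | succ k ih =>
    by_cases hv : v = x
    · exact hv ▸ Anc.refl _ v
    · have hpv := anc_parent (t.push x y) v
      rw [push_parent_of_ne t y hv] at hpv
      exact (ih hk).trans hpv

theorem anc_push_iff_of_not_anc {x v : V} (y z : V) (h : ¬ t.Anc x v) :
    (t.push x y).Anc z v ↔ t.Anc z v := by
  suffices ∀ k v, ¬ t.Anc x v → (t.push x y).parent^[k] v = t.parent^[k] v by
    simp only [Anc, this _ v h]
  intro k
  induction k with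
  | zero => exact fun _ _ => rfl
  | succ k ih =>
    intro v hv
    have hvx : v ≠ x := fun hvx => hv (hvx ▸ Anc.refl t v)
    rw [Function.iterate_succ_apply, Function.iterate_succ_apply, push_parent_of_ne t y hvx,
      ih _ fun hp => hv (hp.trans (anc_parent t v))]

theorem IsRanked.push (ht : t.IsRanked) {x y : V} (hx : x ≠ t.root) (hxy : t.rank x < t.rank y) :
    (t.push x y).IsRanked := by
  have hyx : ¬ t.Anc x y := fun h =>
    (ht.rank_lt_of_anc h (fun h => hxy.ne (congrArg t.rank h)) |>.trans hxy).false
  refine ⟨⟨by simp [push_parent_of_ne t y hx.symm, ht.1.1], fun v => ?_⟩, fun v hv => ?_⟩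
  · have hroot_x : (t.push x y).Anc t.root x :=
      ((anc_push_iff_of_not_anc y _ hyx).2 (ht.1.2 y)).trans ⟨1, push_parent_self t x y⟩
    by_cases hv : t.Anc x v
    · exact hroot_x.trans (anc_push_of_anc y hv)
    · exact (anc_push_iff_of_not_anc y _ hv).2 (ht.1.2 v)
  · by_cases hvx : v = x
    · subst hvx; simpa using hxy
    · rw [push_rank, push_parent_of_ne t y hvx]; exact ht.2 v hv

end Push

section PushStep

variable {t t' s d : PreTree V}

theorem PushStep.root_eq (h : PushStep t t') : t'.root = t.root := by
  obtain ⟨x, y, -, -, rfl⟩ := h; rfl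

theorem PushStep.rank_eq (h : PushStep t t') : t'.rank = t.rank := by
  obtain ⟨x, y, -, -, rfl⟩ := h; rfl

theorem PushStep.isRanked (h : PushStep t t') (ht : t.IsRanked) : t'.IsRanked := by
  obtain ⟨x, y, ⟨-, hx, -, -⟩, hxy, rfl⟩ := h
  exact ht.push hx hxy

/-- A push replaces the parent of a node by a child of that parent, of smaller rank, so this
sum drops. -/
noncomputable def parentRankSum [Fintype V] (t : PreTree V) : ℕ := ∑ v, t.rank (t.parent v)

theorem PushStep.parentRankSum_lt [Fintype V] (h : PushStep t t') (ht : t.RankDec) :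
    t'.parentRankSum < t.parentRankSum := by
  obtain ⟨x, y, ⟨hxy, -, hy, hpar⟩, -, rfl⟩ := h
  refine Finset.sum_lt_sum (fun v _ => ?_) ⟨x, Finset.mem_univ x, ?_⟩
  · by_cases hv : v = x
    · subst hv; simpa [hpar] using (ht y hy).le
    · rw [push_rank, push_parent_of_ne t y hv]
  · simpa [hpar] using ht y hy

/-- If `d ⪯ s` but `d ≠ s`, a mismatched node `x` of maximal rank can be pushed onto the child
`w` of its current parent on the `s`-path from `x`: maximality makes `w` a sibling of `x`. -/
theorem exists_pushStep_le [Fintype V] (hs : s.IsRanked) (hd : d.IsRanked)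
    (hroot : d.root = s.root) (hrank : d.rank = s.rank) (hle : d.Le s) (hne : d ≠ s) :
    ∃ d', PushStep d d' ∧ d'.Le s := by
  obtain ⟨x₀, hx₀⟩ : ∃ x, d.parent x ≠ s.parent x := by
    by_contra! h
    exact hne (PreTree.ext hroot (funext h) hrank)
  obtain ⟨x, hx, hmax⟩ := Finset.exists_max_image
    (Finset.univ.filter fun v => d.parent v ≠ s.parent v) s.rank ⟨x₀, by simpa using hx₀⟩
  simp only [Finset.mem_filter, Finset.mem_univ, true_and] at hx hmax
  have hxroot : x ≠ d.root := by
    rintro rfl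
    exact hx (by rw [hd.1.1, hroot, hs.1.1])
  have hpx : d.parent x ≠ x := fun h => (hd.2 x hxroot).ne' (by rw [h])
  obtain ⟨w, hwx, hwp, hw⟩ := exists_child_of_anc (hle _ _ (anc_parent d x)) hpx
  have hwx_ne : w ≠ x := by rintro rfl; exact hx hwp.symm
  have hrank_xw : s.rank x < s.rank w := hs.rank_lt_of_anc hwx hwx_ne
  have hdw : d.parent w = s.parent w := by
    by_contra h
    exact (hmax w h).not_gt hrank_xw
  have hwroot : w ≠ s.root := by
    rintro rfl
    exact hw (by rw [← hwp, hs.1.1])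
  refine ⟨d.push x w, ⟨x, w, ⟨hwx_ne.symm, hxroot, hroot ▸ hwroot, by rw [hdw, hwp]⟩,
    hrank ▸ hrank_xw, rfl⟩, le_of_forall_anc_parent fun v => ?_⟩
  by_cases hv : v = x
  · subst hv; rwa [push_parent_self]
  · rw [push_parent_of_ne d w hv]; exact hle _ _ (anc_parent d v)

theorem reflTransGen_pushStep_of_le [Fintype V] (hs : s.IsRanked) (hd : d.IsRanked)
    (hroot : d.root = s.root) (hrank : d.rank = s.rank) (hle : d.Le s) :
    Relation.ReflTransGen PushStep d s := by
  induction hn : d.parentRankSum using Nat.strong_induction_on generalizing d with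
  | _ n ih =>
    by_cases hds : d = s
    · exact hds ▸ Relation.ReflTransGen.refl
    obtain ⟨d', hstep, hle'⟩ := exists_pushStep_le hs hd hroot hrank hle hds
    exact .head hstep (ih _ (hn ▸ hstep.parentRankSum_lt hd.2) (hstep.isRanked hd)
      (hstep.root_eq.trans hroot) (hstep.rank_eq.trans hrank) hle' rfl)

end PushStep

section Merge

variable {a a' : PreTree V} {b b' : PreTree W}

@[simp] theorem merge_root_s14 (a : PreTree V) (b : PreTree W) :
    (a.merge b).root = Sum.inl a.root := rfl

@[simp] theorem merge_parent_inl_s14 (a : PreTree V) (b : PreTree W) (v : V) :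
    (a.merge b).parent (Sum.inl v) = Sum.inl (a.parent v) := rfl

@[simp] theorem merge_parent_inr_root (a : PreTree V) (b : PreTree W) :
    (a.merge b).parent (Sum.inr b.root) = Sum.inl a.root := by
  simp [merge]

theorem merge_parent_inr_s14 (a : PreTree V) (b : PreTree W) {w : W} (hw : w ≠ b.root) :
    (a.merge b).parent (Sum.inr w) = Sum.inr (b.parent w) := by
  simp [merge, hw]

theorem anc_merge_inl {u v : V} (h : a.Anc u v) : (a.merge b).Anc (Sum.inl u) (Sum.inl v) :=
  h.map Sum.inl fun _ _ => rfl

theorem anc_merge_inr (hb : b.parent b.root = b.root) {u w : W} (h : b.Anc u w) :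
    (a.merge b).Anc (Sum.inr u) (Sum.inr w) :=
  h.map Sum.inr fun _ hw => merge_parent_inr_s14 a b fun h => hw (h ▸ hb)

theorem IsRanked.merge (ha : a.IsRanked) (hb : b.IsRanked)
    (hr : b.rank b.root ≤ a.rank a.root) : (a.merge b).IsRanked := by
  refine ⟨⟨by simp [ha.1.1], ?_⟩, ?_⟩
  · rintro (v | w)
    · exact anc_merge_inl (ha.1.2 v)
    · have hroot : (a.merge b).Anc (Sum.inl a.root) (Sum.inr b.root) :=
        ⟨1, merge_parent_inr_root a b⟩
      exact hroot.trans (anc_merge_inr hb.1.1 (hb.1.2 w))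
  · rintro (v | w) hz
    · have hv : v ≠ a.root := fun h => hz (by rw [h]; rfl)
      have := ha.2 v hv
      simp only [PreTree.merge, hv, false_and, if_false]
      split_ifs <;> omega
    · by_cases hw : w = b.root
      · subst hw
        rw [merge_parent_inr_root]
        simp only [PreTree.merge, true_and]
        split_ifs <;> omega
      · rw [merge_parent_inr_s14 a b hw]
        exact hb.2 w hw

theorem merge_le_merge (hb' : b'.parent b'.root = b'.root) (hra : a.root = a'.root)
    (hrb : b.root = b'.root) (ha : a.Le a') (hb : b.Le b') : (a.merge b).Le (a'.merge b') := by
  refine le_of_forall_anc_parent ?_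
  rintro (v | w)
  · exact anc_merge_inl (ha _ _ (anc_parent a v))
  · by_cases hw : w = b.root
    · subst hw
      refine ⟨1, ?_⟩
      rw [merge_parent_inr_root, hra, Function.iterate_one, hrb, merge_parent_inr_root]
    · rw [merge_parent_inr_s14 a b hw]
      exact anc_merge_inr hb' (hb _ _ (anc_parent b w))

theorem merge_push_inl (a : PreTree V) (b : PreTree W) (u v : V) :
    (a.merge b).push (Sum.inl u) (Sum.inl v) = (a.push u v).merge b := by
  refine PreTree.ext rfl (funext ?_) rfl
  rintro (u' | w')
  · by_cases hu : u' = u <;> simp [PreTree.merge, PreTree.push, hu]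
  · simp [PreTree.merge, PreTree.push]

theorem merge_push_inr (a : PreTree V) (b : PreTree W) {w : W} (hw : w ≠ b.root) (v : W) :
    (a.merge b).push (Sum.inr w) (Sum.inr v) = a.merge (b.push w v) := by
  refine PreTree.ext rfl (funext ?_) rfl
  rintro (u' | w')
  · simp [PreTree.merge, PreTree.push]
  · by_cases hw' : w' = w
    · subst hw'; simp [PreTree.merge, PreTree.push, hw]
    · simp [PreTree.merge, PreTree.push, hw']

end Merge

section Collapse

variable {t : PreTree V}

@[simp] theorem collapse_root (t : PreTree V) (x : V) : (t.collapse x).root = t.root := rfl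

theorem collapse_parent (t : PreTree V) (x v : V) :
    (t.collapse x).parent v = if v ≠ t.root ∧ t.Anc v x then t.root else t.parent v := rfl

theorem IsRanked.collapse (ht : t.IsRanked) (x : V) : (t.collapse x).IsRanked := by
  refine ⟨⟨by simp [collapse_parent, ht.1.1], fun v => ?_⟩, fun v hv => ?_⟩
  · obtain ⟨k, hk⟩ := ht.1.2 v
    induction k generalizing v with
    | zero => exact hk ▸ Anc.refl _ v
    | succ k ih =>
      by_cases hv : v ≠ t.root ∧ t.Anc v x
      · exact ⟨1, by simp [collapse_parent, hv]⟩
      · exact (ih _ hk).trans ⟨1, by simp [collapse_parent, hv]⟩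
  · change v ≠ t.root at hv
    rw [collapse_parent]
    split_ifs
    · exact ht.rank_lt_of_anc (ht.1.2 v) (Ne.symm hv)
    · exact ht.2 v hv

theorem collapse_le (ht : t.IsTree) (x : V) : (t.collapse x).Le t := by
  refine le_of_forall_anc_parent fun v => ?_
  rw [collapse_parent]
  split_ifs
  exacts [ht.2 v, anc_parent t v]

theorem collapse_push_of_not_anc {x z : V} (h : ¬ t.Anc x z) (y : V) :
    (t.collapse z).push x y = (t.push x y).collapse z := by
  refine PreTree.ext rfl (funext fun v => ?_) rfl
  by_cases hv : v = x
  · subst hv; simp [collapse_parent, anc_push_iff_of_not_anc y _ h, h]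
  · simp [collapse_parent, push_parent_of_ne _ y hv, anc_push_iff_of_not_anc y _ h]

theorem push_root_eq_collapse (hroot : t.parent t.root = t.root) {x : V}
    (hx : t.parent (t.parent x) = t.root) : t.push x t.root = t.collapse x := by
  refine PreTree.ext rfl (funext fun v => ?_) rfl
  by_cases hvx : v = x
  · subst hvx
    by_cases hv : v = t.root <;> simp [collapse_parent, hv, hroot, Anc.refl]
  · rw [push_parent_of_ne t _ hvx, collapse_parent]
    split_ifs with hv
    · have hp := anc_parent_of_ne hv.2 (Ne.symm hvx)
      by_cases hvp : v = t.parent x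
      · rw [hvp, hx]
      · exact absurd (Anc.eq_root hroot (hx ▸ anc_parent_of_ne hp (Ne.symm hvp))) hv.1
    · rfl

end Collapse

namespace Iso

variable {t : PreTree V} {s : PreTree W}

theorem anc (I : t.Iso s) {x y : V} (h : t.Anc x y) : s.Anc (I.toEquiv x) (I.toEquiv y) :=
  h.map I.toEquiv fun v _ => (I.map_parent v).symm

theorem apply_eq_root_iff (I : t.Iso s) {x : V} : I.toEquiv x = s.root ↔ x = t.root := by
  rw [← I.map_root, I.toEquiv.apply_eq_iff_eq]

def symm (I : t.Iso s) : s.Iso t where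
  toEquiv := I.toEquiv.symm
  map_root := by rw [← I.map_root, Equiv.symm_apply_apply]
  map_parent x := I.toEquiv.injective (by simp [I.map_parent])
  map_rank x := by rw [← I.map_rank, Equiv.apply_symm_apply]

theorem isRanked (I : t.Iso s) (ht : t.IsRanked) : s.IsRanked := by
  refine ⟨⟨by rw [← I.map_root, ← I.map_parent, ht.1.1], fun x => ?_⟩, fun x hx => ?_⟩
  · obtain ⟨x, rfl⟩ := I.toEquiv.surjective x
    exact I.map_root ▸ I.anc (ht.1.2 x)
  · obtain ⟨x, rfl⟩ := I.toEquiv.surjective x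
    rw [← I.map_parent, I.map_rank, I.map_rank]
    exact ht.2 x (mt I.apply_eq_root_iff.2 hx)

def push (I : t.Iso s) (x y : V) : (t.push x y).Iso (s.push (I.toEquiv x) (I.toEquiv y)) where
  toEquiv := I.toEquiv
  map_root := I.map_root
  map_parent v := by
    by_cases hv : v = x
    · subst hv; simp
    · rw [push_parent_of_ne _ _ hv, push_parent_of_ne _ _ (I.toEquiv.injective.ne hv),
        I.map_parent]
  map_rank := I.map_rank

end Iso

def transfer (t : PreTree V) (e : V ≃ W) : PreTree W :=
  ⟨e t.root, fun w => e (t.parent (e.symm w)), fun w => t.rank (e.symm w)⟩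

def isoTransfer (t : PreTree V) (e : V ≃ W) : t.Iso (t.transfer e) where
  toEquiv := e
  map_root := rfl
  map_parent x := by simp [transfer]
  map_rank x := by simp [transfer]

end PreTree

theorem IsUnionFind.isRanked {V : Type} {t : PreTree V} (h : IsUnionFind t) : t.IsRanked := by
  induction h with
  | singleton t h1 _ => exact ⟨⟨h1 _, fun x => ⟨0, h1 x⟩⟩, fun x hx => absurd (h1 x) hx⟩
  | merge _ _ _ _ hr iht ihs => exact iht.merge ihs hr
  | collapse _ x _ iht => exact iht.collapse x
  | iso _ _ _ hi iht => exact hi.some.isRanked iht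

theorem IsUnionFind.finite {V : Type} {t : PreTree V} (h : IsUnionFind t) : Finite V := by
  induction h with
  | singleton t h1 _ =>
    have : Subsingleton _ := ⟨fun x y => (h1 x).trans (h1 y).symm⟩
    infer_instance
  | merge _ _ _ _ _ iht ihs => exact Finite.instSum
  | collapse _ _ _ iht => exact iht
  | iso _ _ _ hi iht => exact .of_equiv _ hi.some.toEquiv

theorem IsUnion.isUnionFind {V : Type} {t : PreTree V} (h : IsUnion t) : IsUnionFind t := by
  induction h with
  | singleton t h1 h2 => exact .singleton t h1 h2
  | merge t s _ _ hr iht ihs => exact .merge t s iht ihs hr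
  | iso t s _ hi iht => exact .iso t s iht hi

theorem IsUnionFind.exists_isUnion_le {V : Type} {t : PreTree V} (h : IsUnionFind t) :
    ∃ s : PreTree V, IsUnion s ∧ s.root = t.root ∧ s.rank = t.rank ∧ t.Le s := by
  induction h with
  | singleton t h1 h2 => exact ⟨t, .singleton t h1 h2, rfl, rfl, fun _ _ h => h⟩
  | merge a b _ _ hr iha ihb =>
    obtain ⟨sa, hsa, hra, hka, hla⟩ := iha
    obtain ⟨sb, hsb, hrb, hkb, hlb⟩ := ihb
    refine ⟨sa.merge sb, .merge sa sb hsa hsb (by rwa [hra, hrb, hka, hkb]), by simp [hra], ?_,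
      merge_le_merge hsb.isUnionFind.isRanked.1.1 hra.symm hrb.symm hla hlb⟩
    funext z
    cases z <;> simp [PreTree.merge, hra, hrb, hka, hkb]
  | collapse c z hc ihc =>
    obtain ⟨s, hs, hr, hk, hl⟩ := ihc
    exact ⟨s, hs, hr, hk, (collapse_le hc.isRanked.1 z).trans hl⟩
  | iso t₀ t _ hi ih =>
    obtain ⟨s₀, hs₀, hr₀, hk₀, hl₀⟩ := ih
    obtain ⟨I⟩ := hi
    let J := s₀.isoTransfer I.toEquiv
    refine ⟨s₀.transfer I.toEquiv, .iso _ _ hs₀ ⟨J⟩,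
      by simp [transfer, hr₀, I.map_root], ?_, fun x y hxy => ?_⟩
    · funext w
      obtain ⟨v, rfl⟩ := I.toEquiv.surjective w
      simp [transfer, hk₀, I.map_rank]
    · simpa [J, isoTransfer, Iso.symm] using J.anc (hl₀ _ _ (I.symm.anc hxy))

theorem IsUnionFind.push_root_of_parent_parent_eq_root {V : Type} {t : PreTree V}
    (h : IsUnionFind t) {x : V} (hx : t.parent (t.parent x) = t.root) :
    IsUnionFind (t.push x t.root) :=
  push_root_eq_collapse h.isRanked.1.1 hx ▸ h.collapse _ x

theorem IsUnionFind.push_parent_parent {V : Type} {t : PreTree V} (h : IsUnionFind t) {x : V}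
    (hx : t.parent x ≠ t.root) : IsUnionFind (t.push x (t.parent (t.parent x))) := by
  induction h with
  | singleton t h1 _ => exact absurd (h1 _) hx
  | merge a b ha hb hr iha ihb =>
    rcases x with u | w
    · rw [merge_parent_inl_s14, merge_parent_inl_s14, merge_push_inl]
      exact .merge _ b (iha fun h => hx (by simp [h])) hb hr
    · have hw : w ≠ b.root := by rintro rfl; exact hx (merge_parent_inr_root a b)
      rw [merge_parent_inr_s14 a b hw]
      by_cases hpw : b.parent w = b.root
      · rw [hpw, merge_parent_inr_root]
        exact (IsUnionFind.merge a b ha hb hr).push_root_of_parent_parent_eq_root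
          (by rw [merge_parent_inr_s14 a b hw, hpw]; simp)
      · rw [merge_parent_inr_s14 a b hpw, merge_push_inr a b hw]
        exact .merge a _ ha (ihb hpw) hr
  | collapse c z hc ihc =>
    have hxr : x ≠ c.root := by
      rintro rfl
      exact hx (by simp [collapse_parent, hc.isRanked.1.1])
    have hxz : ¬ c.Anc x z := fun h => hx (by simp [collapse_parent, hxr, h])
    have hpx : (c.collapse z).parent x = c.parent x := by simp [collapse_parent, hxz]
    rw [hpx] at hx ⊢
    by_cases hy : c.parent x ≠ c.root ∧ c.Anc (c.parent x) z
    · have hgp : (c.collapse z).parent (c.parent x) = c.root := if_pos hy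
      rw [hgp]
      exact (IsUnionFind.collapse c z hc).push_root_of_parent_parent_eq_root
        (by rw [hpx, hgp]; rfl)
    · rw [collapse_parent, if_neg hy, collapse_push_of_not_anc hxz]
      exact .collapse _ z (ihc hx)
  | iso t₀ t _ hi ih =>
    obtain ⟨I⟩ := hi
    obtain ⟨x, rfl⟩ := I.toEquiv.surjective x
    rw [← I.map_parent, Ne, I.apply_eq_root_iff] at hx
    rw [← I.map_parent, ← I.map_parent]
    exact .iso _ _ (ih hx) ⟨I.push _ _⟩

theorem IsUnionFind.of_pushStep {V : Type} {t t' : PreTree V} (h : PushStep t t')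
    (ht' : IsUnionFind t') : IsUnionFind t := by
  obtain ⟨x, y, ⟨hxy, -, hy, hpar⟩, -, rfl⟩ := h
  have := ht'.push_parent_parent (x := x) (by simpa using hy)
  rwa [push_parent_self, push_parent_of_ne t y hxy.symm, ← hpar, push_push,
    push_parent_eq] at this

theorem isUnionFind_iff_pushes_to_union_general {V : Type} (t : PreTree V) :
    IsUnionFind t ↔
      ∃ s : PreTree V, Relation.ReflTransGen PreTree.PushStep t s ∧ IsUnion s := by
  refine ⟨fun h => ?_, fun ⟨s, hts, hs⟩ => ?_⟩
  · have := h.finite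
    have := Fintype.ofFinite V
    obtain ⟨s, hs, hroot, hrank, hle⟩ := h.exists_isUnion_le
    exact ⟨s, reflTransGen_pushStep_of_le hs.isUnionFind.isRanked h.isRanked hroot.symm
      hrank.symm hle, hs⟩
  · exact hts.head_induction_on hs.isUnionFind fun h _ ih => ih.of_pushStep h

/-- a ranked tree is a Union-Find tree iff some Union tree is
obtainable from it by a finite sequence of pushes. -/
theorem isUnionFind_iff_pushes_to_union {V : Type} (t : PreTree V) (ht : t.IsRanked) :
    IsUnionFind t ↔
      ∃ s : PreTree V, Relation.ReflTransGen PreTree.PushStep t s ∧ IsUnion s :=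
  isUnionFind_iff_pushes_to_union_general t
end
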